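/- arXiv:2105.09989 — 2 statements merged into one kernel-verified Lean document; each statement's English description precedes it below -/
import Mathlib

section
/- There exist a feature space X, a loss function L over X that has the uniform convergence property, a distribution D over X × {0,1} with finite support, a finite set H of predictors, a finite collection G of subsets of X each having positive probability under D, and a real ε > 0, such that no predictor h : X → [0,1] satisfies L_{D_g}(h) ≤ min_{h' ∈ H} L_{D_g}(h') + ε simultaneously for all g ∈ G. -/
open scoped ENNReal
open scoped Classical

noncomputable section

namespace MultiPAC

variable {X : Type*}

def Supp (D : PMF (X × Bool)) : Set X := {x | ∃ y, D (x, y) ≠ 0}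

structure LossFunction (X : Type*) where
  loss : PMF (X × Bool) → (X → unitInterval) → unitInterval
  locality : ∀ (D : PMF (X × Bool)) (h h' : X → unitInterval),
    (∀ x ∈ Supp D, h x = h' x) → loss D h = loss D h'

def condOn (D : PMF (X × Bool)) (g : Set X) (hg : ∃ z : X × Bool, z.1 ∈ g ∧ D z ≠ 0) :
    PMF (X × Bool) :=
  D.filter {z | z.1 ∈ g} hg

def empDist {m : ℕ} (hm : m ≠ 0) (S : Fin m → X × Bool) : PMF (X × Bool) :=
  haveI : NeZero m := ⟨hm⟩
  (PMF.uniformOfFintype (Fin m)).map S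

def iidProb {α : Type*} {m : ℕ} (D : PMF α) (E : Set (Fin m → α)) : ℝ≥0∞ :=
  ∑' S : Fin m → α, E.indicator (fun T => ∏ i, D (T i)) S

/-- Boundedness by a polynomial in `1/ε`, `1/δ` and `log k`. -/
def PolyBound3 (M : ℝ → ℝ → ℕ → ℕ) : Prop :=
  ∃ (C : ℝ) (n : ℕ), ∀ ε δ : ℝ, ε ∈ Set.Ioo (0:ℝ) 1 → δ ∈ Set.Ioo (0:ℝ) 1 → ∀ k : ℕ,
    (M ε δ k : ℝ) ≤ C * (1/ε + 1/δ + Real.log k + 1) ^ n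

/-- `L` has the uniform convergence property with sample-complexity function `M`. -/
def UniformConvergenceWith (L : LossFunction X) (M : ℝ → ℝ → ℕ → ℕ) : Prop :=
  ∀ (H : Finset (X → unitInterval)) (ε δ : ℝ), ε ∈ Set.Ioo (0:ℝ) 1 → δ ∈ Set.Ioo (0:ℝ) 1 →
    ∀ (D : PMF (X × Bool)) (m : ℕ) (hm : m ≠ 0), M ε δ H.card ≤ m →
      1 - ENNReal.ofReal δ ≤ iidProb D {S : Fin m → X × Bool |
        ∀ h ∈ H, |(L.loss (empDist hm S) h : ℝ) - (L.loss D h : ℝ)| ≤ ε}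

/-- `L` has the uniform convergence property (w.r.t. finite classes). -/
def UniformConvergence (L : LossFunction X) : Prop :=
  ∃ M : ℝ → ℝ → ℕ → ℕ, PolyBound3 M ∧ UniformConvergenceWith L M

/-- `L` is unambiguous: on every distribution supported on a single point `x` there is a
unique value `v` such that every predictor taking value `v` at `x` minimizes the loss. -/
def Unambiguous (L : LossFunction X) : Prop :=
  ∀ (D : PMF (X × Bool)) (x : X), Supp D = {x} →
    ∃! v : unitInterval, ∀ h : X → unitInterval, h x = v →
      ∀ h' : X → unitInterval, L.loss D h ≤ L.loss D h'

/-- `L` is multi-group compatible. -/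
def MultiGroupCompatible (L : LossFunction X) : Prop :=
  ∀ (D : PMF (X × Bool)) (H : Set (X → unitInterval)) (G : Set (Set X)),
    ∃ hstar : X → unitInterval, ∀ g ∈ G, ∀ (hg : ∃ z : X × Bool, z.1 ∈ g ∧ D z ≠ 0),
      ∀ h' ∈ H, L.loss (condOn D g hg) hstar ≤ L.loss (condOn D g hg) h'

/-- The probability mass that `D` puts on the event `x ∈ g`. -/
def groupMass (D : PMF (X × Bool)) (g : Set X) : ℝ≥0∞ := D.toOuterMeasure {z | z.1 ∈ g}

/-- The probability (over an i.i.d. size-`m` sample from `D` and the internal randomness of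
the algorithm `A`) that the output predictor of `A` is in `Good`. -/
def algSuccess {m : ℕ} (D : PMF (X × Bool)) (A : (Fin m → X × Bool) → PMF (X → unitInterval))
    (Good : (X → unitInterval) → Prop) : ℝ≥0∞ :=
  ∑' S : Fin m → X × Bool, (∏ i, D (S i)) * (A S).toOuterMeasure {h | Good h}

/-- Boundedness by a polynomial in `1/ε`, `1/δ`, `1/γ`, `log s` and `log t`. -/
def PolyBound5 (M : ℝ → ℝ → ℝ → ℕ → ℕ → ℕ) : Prop :=
  ∃ (C : ℝ) (n : ℕ), ∀ ε δ γ : ℝ, ε ∈ Set.Ioo (0:ℝ) 1 → δ ∈ Set.Ioo (0:ℝ) 1 →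
    γ ∈ Set.Ioo (0:ℝ) 1 → ∀ s t : ℕ,
      (M ε δ γ s t : ℝ) ≤ C * (1/ε + 1/δ + 1/γ + Real.log s + Real.log t + 1) ^ n

/-- `L` is multi-group agnostic PAC learnable. -/
def MultiGroupLearnable (L : LossFunction X) : Prop :=
  ∃ (A : (m : ℕ) → (Fin m → X × Bool) → PMF (X → unitInterval))
    (M : ℝ → ℝ → ℝ → ℕ → ℕ → ℕ), PolyBound5 M ∧
    ∀ (ε δ γ : ℝ), ε ∈ Set.Ioo (0:ℝ) 1 → δ ∈ Set.Ioo (0:ℝ) 1 → γ ∈ Set.Ioo (0:ℝ) 1 →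
    ∀ (H : Finset (X → unitInterval)) (G : Finset (Set X)) (D : PMF (X × Bool)) (m : ℕ),
      M ε δ γ H.card G.card ≤ m →
      1 - ENNReal.ofReal δ ≤ algSuccess D (A m) (fun h =>
        ∀ g ∈ G, ENNReal.ofReal γ ≤ groupMass D g →
          ∀ (hg : ∃ z : X × Bool, z.1 ∈ g ∧ D z ≠ 0),
          ∀ h' ∈ H, (L.loss (condOn D g hg) h : ℝ) ≤ (L.loss (condOn D g hg) h' : ℝ) + ε)

/-- `Pr_D[y = 1 ∣ X = x]`, as an element of `[0,1]`. -/
def condProb (D : PMF (X × Bool)) (x : X) : unitInterval :=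
  ⟨(D (x, true)).toReal / ((D (x, true)).toReal + (D (x, false)).toReal), by
    constructor
    · positivity
    · rcases eq_or_lt_of_le (add_nonneg ENNReal.toReal_nonneg ENNReal.toReal_nonneg :
        (0:ℝ) ≤ (D (x, true)).toReal + (D (x, false)).toReal) with hz | hz
      · rw [← hz, div_zero]
        exact zero_le_one
      · rw [div_le_one hz]
        exact le_add_of_nonneg_right ENNReal.toReal_nonneg⟩

/-- The predictor `h_D` : `h_D x = f (x, p_D x)` on the support of `D`, and `0` elsewhere. -/
def bayesPred (f : X × unitInterval → unitInterval) (D : PMF (X × Bool)) :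
    X → unitInterval :=
  fun x => if x ∈ Supp D then f (x, condProb D x) else 0

/-- `L` is `f`-proper. -/
def FProper (f : X × unitInterval → unitInterval) (L : LossFunction X) : Prop :=
  ∀ (D : PMF (X × Bool)) (h : X → unitInterval), L.loss D (bayesPred f D) ≤ L.loss D h

/-!
Take `X = Bool` and the loss `L_D(h) = p * |h true - (1 - p)|` with `p = Pr_D[x = true]`. The
factor `p` vanishes when `true ∉ supp D`, which makes `L` local, and `L` is `2`-Lipschitz in `p`,
so uniform convergence reduces to the concentration of the empirical frequency of `x = true`;
Chebyshev's inequality gives it with about `1 / (ε² δ)` samples. Under the uniform distribution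
on `Bool × Bool` the group `{true}` has `p = 1` and forces `h true ≈ 0`, while the group `univ`
has `p = 1/2` and forces `h true ≈ 1/2`.
-/

open MeasureTheory ProbabilityTheory

section WeakLaw

variable {Ω : Type*} [MeasurableSpace Ω] (μ : Measure Ω) [IsProbabilityMeasure μ]
  {A : Set Ω} (hA : MeasurableSet A) (m : ℕ)

include hA

theorem memLp_indicator_one : MemLp (A.indicator (1 : Ω → ℝ)) 2 μ :=
  (memLp_const (1 : ℝ)).indicator hA

theorem memLp_indicator_pi_eval (i : Fin m) :
    MemLp (fun ω : Fin m → Ω => A.indicator (1 : Ω → ℝ) (ω i)) 2 (Measure.pi fun _ => μ) :=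
  (memLp_indicator_one μ hA).comp_measurePreserving (measurePreserving_eval _ i)

theorem integral_pi_sum_indicator :
    ∫ ω, ∑ i, A.indicator (1 : Ω → ℝ) (ω i) ∂(Measure.pi fun _ : Fin m => μ) = m * μ.real A := by
  rw [integral_finsetSum _ fun i _ => (memLp_indicator_pi_eval μ hA m i).integrable one_le_two]
  have hcoord : ∀ i : Fin m,
      ∫ ω, A.indicator (1 : Ω → ℝ) (ω i) ∂(Measure.pi fun _ => μ) = μ.real A := fun i => by
    rw [integral_comp_eval (μ := fun _ => μ) (memLp_indicator_one μ hA).aestronglyMeasurable,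
      integral_indicator_one hA]
  simp [hcoord]

theorem variance_pi_sum_indicator_le :
    variance (fun ω => ∑ i, A.indicator (1 : Ω → ℝ) (ω i)) (Measure.pi fun _ : Fin m => μ) ≤
      m / 4 := by
  have hsum : (fun ω : Fin m → Ω => ∑ i, A.indicator (1 : Ω → ℝ) (ω i)) =
      ∑ i, fun ω => A.indicator (1 : Ω → ℝ) (ω i) := by
    ext; simp
  rw [hsum, variance_sum_pi fun _ => memLp_indicator_one μ hA]
  calc ∑ _ : Fin m, variance (A.indicator (1 : Ω → ℝ)) μ
      ≤ ∑ _ : Fin m, ((1 - 0) / 2 : ℝ) ^ 2 := by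
        gcongr
        refine variance_le_sq_of_bounded (ae_of_all _ fun x => ?_)
          (memLp_indicator_one μ hA).aestronglyMeasurable.aemeasurable
        by_cases hx : x ∈ A <;> simp [hx]
    _ = m / 4 := by simp; ring

theorem pi_empiricalFreq_deviation_le (hm : m ≠ 0) {c : ℝ} (hc : 0 < c) :
    Measure.pi (fun _ : Fin m => μ)
        {ω | c ≤ |(∑ i, A.indicator (1 : Ω → ℝ) (ω i)) / m - μ.real A|} ≤
      ENNReal.ofReal (1 / (4 * m * c ^ 2)) := by
  have hm' : (0 : ℝ) < m := by positivity
  have hdev : ∀ s p : ℝ, c ≤ |s / m - p| ↔ m * c ≤ |s - m * p| := fun s p => by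
    rw [show s / m - p = (s - m * p) / m by field_simp, abs_div, abs_of_pos hm',
      le_div_iff₀ hm', mul_comm]
  simp_rw [hdev]
  rw [← integral_pi_sum_indicator μ hA m]
  calc _ ≤ ENNReal.ofReal (variance (fun ω => ∑ i, A.indicator (1 : Ω → ℝ) (ω i))
          (Measure.pi fun _ : Fin m => μ) / (m * c) ^ 2) :=
        meas_ge_le_variance_div_sq (memLp_finsetSum _ fun i _ => memLp_indicator_pi_eval μ hA m i)
          (by positivity)
    _ ≤ ENNReal.ofReal (m / 4 / (m * c) ^ 2) := by
        gcongr; exact variance_pi_sum_indicator_le μ hA m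
    _ = ENNReal.ofReal (1 / (4 * m * c ^ 2)) := by congr 1; field_simp

end WeakLaw

theorem iidProb_eq_pi {α : Type*} [MeasurableSpace α] [MeasurableSingletonClass α] [Countable α]
    {m : ℕ} (D : PMF α) (E : Set (Fin m → α)) :
    iidProb D E = Measure.pi (fun _ => D.toMeasure) E := by
  rw [iidProb, ← Measure.tsum_indicator_apply_singleton _ E E.to_countable.measurableSet]
  congr with S
  simp [PMF.toMeasure_apply_singleton]

theorem empDist_toMeasure_real [MeasurableSpace X] {A : Set (X × Bool)} (hA : MeasurableSet A)
    {m : ℕ} (hm : m ≠ 0) (S : Fin m → X × Bool) :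
    (empDist hm S).toMeasure.real A = (∑ i, A.indicator (1 : X × Bool → ℝ) (S i)) / m := by
  have : NeZero m := ⟨hm⟩
  rw [measureReal_def, empDist, PMF.toMeasure_map_apply _ _ _ (measurable_of_finite S) hA,
    PMF.toMeasure_apply_fintype, ENNReal.toReal_sum fun i _ =>
      ne_top_of_le_ne_top (PMF.apply_ne_top _ i) (Set.indicator_le_self _ _ i), Finset.sum_div]
  congr with i
  by_cases h : S i ∈ A <;> simp [h, PMF.uniformOfFintype_apply]

theorem condOn_univ (D : PMF (X × Bool)) (hg : ∃ z : X × Bool, z.1 ∈ Set.univ ∧ D z ≠ 0) :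
    condOn D Set.univ hg = D := by
  ext z
  simp [condOn, PMF.filter_apply]

def trueMass (D : PMF (Bool × Bool)) : ℝ := D.toMeasure.real {z | z.1 = true}

theorem trueMass_mem_Icc (D : PMF (Bool × Bool)) : trueMass D ∈ Set.Icc (0 : ℝ) 1 :=
  ⟨measureReal_nonneg, measureReal_le_one⟩

theorem trueMass_eq_zero_of_notMem {D : PMF (Bool × Bool)} (h : true ∉ Supp D) :
    trueMass D = 0 := by
  rw [trueMass, measureReal_eq_zero_iff, PMF.toMeasure_apply_eq_zero_iff _ (by measurability)]
  refine Set.disjoint_left.2 fun z hz hzt => h ⟨z.2, ?_⟩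
  rw [← hzt]
  exact (PMF.mem_support_iff D z).1 hz

theorem trueMass_condOn_of_subset {D : PMF (Bool × Bool)} {g : Set Bool} (hg : g ⊆ {true})
    (hD : ∃ z : Bool × Bool, z.1 ∈ g ∧ D z ≠ 0) : trueMass (condOn D g hD) = 1 := by
  have hsupp : (condOn D g hD).support ⊆ {z | z.1 = true} :=
    fun z hz => hg ((PMF.mem_support_filter_iff _).1 hz).1
  rw [trueMass, measureReal_def,
    (PMF.toMeasure_apply_eq_one_iff _ (by measurability)).2 hsupp, ENNReal.toReal_one]

theorem trueMass_uniformOfFintype : trueMass (PMF.uniformOfFintype (Bool × Bool)) = 1 / 2 := by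
  rw [trueMass, measureReal_def, PMF.toMeasure_apply_fintype]
  simp [Fintype.sum_prod_type, ENNReal.toReal_add, ENNReal.toReal_inv]
  norm_num

def incompatibleLossValue (D : PMF (Bool × Bool)) (h : Bool → unitInterval) : ℝ :=
  trueMass D * |(h true : ℝ) - (1 - trueMass D)|

theorem incompatibleLossValue_mem_Icc (D : PMF (Bool × Bool)) (h : Bool → unitInterval) :
    incompatibleLossValue D h ∈ Set.Icc (0 : ℝ) 1 := by
  obtain ⟨hp0, hp1⟩ := trueMass_mem_Icc D
  obtain ⟨ha0, ha1⟩ := (h true).2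
  exact ⟨mul_nonneg hp0 (abs_nonneg _),
    mul_le_one₀ hp1 (abs_nonneg _) (abs_le.2 ⟨by linarith, by linarith⟩)⟩

def incompatibleLoss : LossFunction Bool where
  loss D h := ⟨incompatibleLossValue D h, incompatibleLossValue_mem_Icc D h⟩
  locality D h h' hhh' := by
    by_cases ht : true ∈ Supp D
    · simp [incompatibleLossValue, hhh' true ht]
    · simp [incompatibleLossValue, trueMass_eq_zero_of_notMem ht]

theorem abs_incompatibleLossValue_sub_le (D D' : PMF (Bool × Bool)) (h : Bool → unitInterval) :
    |incompatibleLossValue D' h - incompatibleLossValue D h| ≤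
      2 * |trueMass D' - trueMass D| := by
  obtain ⟨hp0, hp1⟩ := trueMass_mem_Icc D
  obtain ⟨hq0, hq1⟩ := trueMass_mem_Icc D'
  obtain ⟨ha0, ha1⟩ := (h true).2
  set p := trueMass D
  set q := trueMass D'
  set a : ℝ := (h true : ℝ)
  have hsplit : incompatibleLossValue D' h - incompatibleLossValue D h =
      (q - p) * |a - (1 - q)| + p * (|a - (1 - q)| - |a - (1 - p)|) := by
    simp only [incompatibleLossValue]; ring
  have hdist : |a - (1 - q)| ≤ 1 := abs_le.2 ⟨by linarith, by linarith⟩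
  have hlip : |(|a - (1 - q)| - |a - (1 - p)|)| ≤ |q - p| := by
    simpa [abs_sub_comm] using abs_abs_sub_abs_le_abs_sub (a - (1 - q)) (a - (1 - p))
  rw [hsplit]
  calc _ ≤ |q - p| * |a - (1 - q)| + p * |(|a - (1 - q)| - |a - (1 - p)|)| := by
        refine (abs_add_le _ _).trans_eq ?_
        rw [abs_mul, abs_mul, abs_abs, abs_of_nonneg hp0]
    _ ≤ |q - p| * 1 + 1 * |q - p| := by gcongr
    _ = 2 * |q - p| := by ring

def chebyshevSampleSize (ε δ : ℝ) (_ : ℕ) : ℕ := ⌈1 / (ε ^ 2 * δ)⌉₊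

theorem polyBound3_chebyshevSampleSize : PolyBound3 chebyshevSampleSize := by
  refine ⟨2, 3, fun ε δ ⟨hε0, hε1⟩ ⟨hδ0, hδ1⟩ k => ?_⟩
  have hε : 1 ≤ 1 / ε := one_le_one_div hε0 hε1.le
  have hδ : 1 ≤ 1 / δ := one_le_one_div hδ0 hδ1.le
  have hlog : 0 ≤ Real.log k := Real.log_natCast_nonneg k
  set t := 1 / ε + 1 / δ + Real.log k + 1
  calc (chebyshevSampleSize ε δ k : ℝ) ≤ 1 / (ε ^ 2 * δ) + 1 :=
        (Nat.ceil_lt_add_one (by positivity)).le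
    _ = (1 / ε) ^ 2 * (1 / δ) + 1 := by field_simp
    _ ≤ t ^ 2 * t + t ^ 3 := by
        gcongr
        · linarith
        · linarith
        · exact one_le_pow₀ (by linarith)
    _ = 2 * t ^ 3 := by ring

theorem uniformConvergence_incompatibleLoss : UniformConvergence incompatibleLoss := by
  refine ⟨chebyshevSampleSize, polyBound3_chebyshevSampleSize, ?_⟩
  rintro H ε δ ⟨hε0, -⟩ ⟨hδ0, -⟩ D m hm hM
  have hmR : 1 / (ε ^ 2 * δ) ≤ m := Nat.ceil_le.1 hM
  have hA : MeasurableSet {z : Bool × Bool | z.1 = true} := by measurability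
  set ν := Measure.pi fun _ : Fin m => D.toMeasure
  set Bad := {S : Fin m → Bool × Bool | ε / 2 ≤
    |(∑ i, {z : Bool × Bool | z.1 = true}.indicator (1 : Bool × Bool → ℝ) (S i)) / m -
      trueMass D|}
  have hBad : ν Bad ≤ ENNReal.ofReal δ := by
    refine (pi_empiricalFreq_deviation_le _ hA m hm (half_pos hε0)).trans
      (ENNReal.ofReal_le_ofReal ?_)
    have hm' : (0 : ℝ) < m := by positivity
    rw [div_le_iff₀ (by positivity)] at hmR ⊢
    linarith
  have hGood : Badᶜ ⊆ {S | ∀ h ∈ H,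
      |(incompatibleLoss.loss (empDist hm S) h : ℝ) - (incompatibleLoss.loss D h : ℝ)| ≤ ε} := by
    intro S hS h _
    have hclose : |trueMass (empDist hm S) - trueMass D| < ε / 2 := by
      simpa [Bad, trueMass, empDist_toMeasure_real hA] using hS
    calc _ ≤ 2 * |trueMass (empDist hm S) - trueMass D| :=
          abs_incompatibleLossValue_sub_le D (empDist hm S) h
      _ ≤ ε := by linarith
  rw [iidProb_eq_pi]
  calc 1 - ENNReal.ofReal δ ≤ 1 - ν Bad := tsub_le_tsub_left hBad 1
    _ = ν Badᶜ := (prob_compl_eq_one_sub Bad.to_countable.measurableSet).symm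
    _ ≤ _ := measure_mono hGood

/-- There exist a feature space `X`, a loss function `L` over `X` with the
uniform convergence property, a finitely supported distribution `D`, a finite nonempty set `H`
of predictors, a finite collection `G` of subgroups each of positive probability, and `ε > 0`,
such that no predictor is `ε`-competitive with the best hypothesis in `H` simultaneously for
all groups in `G`. -/
theorem exists_incompatible_loss :
    ∃ (X : Type) (L : LossFunction X), UniformConvergence L ∧
      ∃ D : PMF (X × Bool), (Supp D).Finite ∧
        ∃ (H : Finset (X → unitInterval)) (G : Finset (Set X)) (ε : ℝ),
          0 < ε ∧ H.Nonempty ∧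
          (∀ g ∈ G, ∃ z : X × Bool, z.1 ∈ g ∧ D z ≠ 0) ∧
          ¬ ∃ h : X → unitInterval, ∀ g ∈ G,
              ∀ (hg : ∃ z : X × Bool, z.1 ∈ g ∧ D z ≠ 0),
              ∀ h' ∈ H,
                (L.loss (condOn D g hg) h : ℝ) ≤ (L.loss (condOn D g hg) h' : ℝ) + ε := by
  have hpos : ∀ g : Set Bool, true ∈ g →
      ∃ z : Bool × Bool, z.1 ∈ g ∧ PMF.uniformOfFintype (Bool × Bool) z ≠ 0 :=
    fun g hg => ⟨(true, true), hg, by simp⟩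
  let half : unitInterval := ⟨1 / 2, by norm_num, by norm_num⟩
  refine ⟨Bool, incompatibleLoss, uniformConvergence_incompatibleLoss,
    PMF.uniformOfFintype (Bool × Bool), Set.toFinite _,
    {fun _ => 0, fun _ => half}, {{true}, Set.univ}, 1 / 8, by norm_num, by simp, ?_, ?_⟩
  · simp only [Finset.mem_insert, Finset.mem_singleton, forall_eq_or_imp, forall_eq]
    exact ⟨hpos _ rfl, hpos _ trivial⟩
  · rintro ⟨h, hh⟩
    have htrue := hh {true} (by simp) (hpos _ rfl) (fun _ => 0) (by simp)
    have huniv := hh Set.univ (by simp) (hpos _ trivial) (fun _ => half) (by simp)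
    simp only [incompatibleLoss, incompatibleLossValue, condOn_univ,
      trueMass_condOn_of_subset subset_rfl, trueMass_uniformOfFintype] at htrue huniv
    norm_num [half] at htrue huniv
    linarith [le_abs_self (h true : ℝ), neg_abs_le ((h true : ℝ) - 1 / 2)]

end MultiPAC
end
end

section
/- Let f : X × [0,1] → [0,1] and let L be a loss function over X that is f-proper. Fix a distribution D over X × Y, a predictor p̃ : X → [0,1], a group g ⊆ X with Pr_D[x ∈ g] > 0, a predictor h, and ε', δ' ∈ (0,1). Suppose k_G ∈ ℕ is such that for every integer r ≥ k_G and every distribution D' over X × Y, with probability at least 1 − δ' over an i.i.d. sample S' of size r from D', both |L_{S'}(h) − L_{D'}(h)| ≤ ε' and |L_{S'}(f∘p̃) − L_{D'}(f∘p̃)| ≤ ε' hold; and suppose k ∈ ℕ is such that with probability at least 1 − δ', an i.i.d. sample of size k from the X-marginal of D contains at least k_G points lying in g. Then the k-sample distinguisher A_{g,h,ε'} accepts with probability at least 1 − 2δ' on inputs generated from the modeled distribution: Pr_{(x_i, y_i)_{i≤k} ~ D̃^k}[A_{g,h,ε'}((x_i, y_i, p̃(x_i))_{i≤k}) = 1]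 ≥ 1 − 2δ', where D̃ = D(p̃). -/
/-!
Write `μ = D(p̃)` and `ν` for `μ` conditioned on `x ∈ g`. On the support of `ν` the conditional
label probability is `p̃`, so `f`-properness makes `f ∘ p̃` at least as good as `h` on `ν`.
Conditionally on the set `A` of sample positions that land in `g`, the subsample at `A` is an
i.i.d. sample of size `|A|` from `ν`, and `f_g` agrees with `f ∘ p̃` on it. Hence, unless `A` has
fewer than `k_G` elements (probability at most `δ'`) or the subsample is atypical for `ν`
(probability at most `δ'`), uniform convergence gives
`L_{S_g}(f_g) ≤ L_ν(f ∘ p̃) + ε' ≤ L_ν(h) + ε' ≤ L_{S_g}(h) + 2ε'`.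
-/

open scoped ENNReal
open scoped Classical

noncomputable section

namespace MultiPAC

variable {X : Type*}

/-- The modeled distribution `D̃ = D(p̃)`: draw `x` from the `X`-marginal of `D`, then draw
`y ∈ {0,1}` with `Pr[y = 1] = p̃ x`. -/
def modeled (D : PMF (X × Bool)) (pt : X → unitInterval) : PMF (X × Bool) :=
  (D.map Prod.fst).bind fun x =>
    (PMF.bernoulli (Real.toNNReal (pt x)) (Real.toNNReal_le_one.mpr (pt x).2.2)).map
      fun y => (x, y)

/-- The empirical distribution of the subsample of an input sequence consisting of the
labeled pairs whose feature lies in `g` (with multiplicity). -/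
def subEmp {k : ℕ} (inp : Fin k → X × Bool × unitInterval) (g : Set X)
    (hne : (Finset.univ.filter fun i : Fin k => (inp i).1 ∈ g).Nonempty) :
    PMF (X × Bool) :=
  (PMF.uniformOfFinset _ hne).map fun i => ((inp i).1, (inp i).2.1)

/-- The predictor `f_g` defined from an input sequence: `f_g x = f (x, p_i)` for the smallest
`i` with `x_i = x`, and `0` if no such `i` exists. -/
def fg {k : ℕ} (f : X × unitInterval → unitInterval)
    (inp : Fin k → X × Bool × unitInterval) : X → unitInterval := fun x =>
  if hx : (Finset.univ.filter fun i : Fin k => (inp i).1 = x).Nonempty then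
    f (x, (inp ((Finset.univ.filter fun i : Fin k => (inp i).1 = x).min' hx)).2.2)
  else 0

/-- The `k`-sample distinguisher `A_{g,h,α}`: accepts iff on the subsample of points lying in
`g`, the empirical loss of `f_g` is at most that of `h` plus `2α` (accepting by convention when
the subsample is empty). -/
def distinguisher (L : LossFunction X) (f : X × unitInterval → unitInterval) (g : Set X)
    (h : X → unitInterval) (α : ℝ) {k : ℕ} (inp : Fin k → X × Bool × unitInterval) : Bool :=
  if hne : (Finset.univ.filter fun i : Fin k => (inp i).1 ∈ g).Nonempty then
    decide ((L.loss (subEmp inp g hne) (fg f inp) : ℝ) ≤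
      (L.loss (subEmp inp g hne) h : ℝ) + 2 * α)
  else true

open Finset MeasureTheory

section IidSamples

variable {Z W : Type*}

theorem tsum_pi_prod_eq_prod_tsum : ∀ {n : ℕ} (w : Fin n → Z → ℝ≥0∞),
    ∑' S : Fin n → Z, ∏ i, w i (S i) = ∏ i, ∑' z, w i z
  | 0, w => by simp
  | n + 1, w => by
    rw [← (Fin.consEquiv fun _ => Z).tsum_eq]
    simp only [Fin.consEquiv_apply, Fin.prod_univ_succ, Fin.cons_zero, Fin.cons_succ]
    rw [ENNReal.tsum_prod', ← tsum_pi_prod_eq_prod_tsum, ← ENNReal.tsum_mul_right]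
    simp only [ENNReal.tsum_mul_left]

def iidPMF (μ : PMF Z) (m : ℕ) : PMF (Fin m → Z) :=
  ⟨fun S => ∏ i, μ (S i), ENNReal.summable.hasSum_iff.2 <| by
    rw [tsum_pi_prod_eq_prod_tsum]; simp⟩

variable {m : ℕ}

@[simp]
theorem iidPMF_apply (μ : PMF Z) (S : Fin m → Z) : iidPMF μ m S = ∏ i, μ (S i) := rfl

theorem iidProb_eq_toOuterMeasure (μ : PMF Z) (E : Set (Fin m → Z)) :
    iidProb μ E = (iidPMF μ m).toOuterMeasure E := by
  rw [PMF.toOuterMeasure_apply]; rfl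

theorem iidProb_univ (μ : PMF Z) : iidProb μ (Set.univ : Set (Fin m → Z)) = 1 := by
  rw [iidProb_eq_toOuterMeasure, PMF.toOuterMeasure_apply_eq_one_iff]
  exact Set.subset_univ _

theorem iidProb_mono (μ : PMF Z) {E F : Set (Fin m → Z)} (h : E ⊆ F) :
    iidProb μ E ≤ iidProb μ F := by
  simpa only [iidProb_eq_toOuterMeasure] using measure_mono h

theorem iidProb_compl_le_iff (μ : PMF Z) (E : Set (Fin m → Z)) (δ : ℝ≥0∞) :
    iidProb μ Eᶜ ≤ δ ↔ 1 - δ ≤ iidProb μ E := by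
  have hE : iidProb μ E + iidProb μ Eᶜ = 1 := by
    rw [← iidProb_univ μ, iidProb, iidProb, iidProb, ← ENNReal.tsum_add]
    congr 1 with S
    rw [Set.indicator_univ, ← Pi.add_apply (E.indicator _), Set.indicator_self_add_compl]
  have hEc : iidProb μ Eᶜ = 1 - iidProb μ E :=
    ENNReal.eq_sub_of_add_eq (ne_top_of_le_ne_top ENNReal.one_ne_top (hE ▸ le_self_add))
      (by rwa [add_comm])
  rw [hEc, tsub_le_iff_right, tsub_le_iff_left, add_comm]

theorem iidPMF_map_comp (μ : PMF Z) (φ : Z → W) :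
    (iidPMF μ m).map (φ ∘ ·) = iidPMF (μ.map φ) m := by
  ext T
  simp only [PMF.map_apply, iidPMF_apply]
  rw [← tsum_pi_prod_eq_prod_tsum]
  refine tsum_congr fun S => ?_
  simp only [prod_ite_zero, mem_univ, true_implies, funext_iff, Function.comp_apply]

theorem iidProb_map (μ : PMF Z) (φ : Z → W) (E : Set (Fin m → W)) :
    iidProb (μ.map φ) E = iidProb μ {S | φ ∘ S ∈ E} := by
  rw [iidProb_eq_toOuterMeasure, ← iidPMF_map_comp, PMF.toOuterMeasure_map_apply,
    iidProb_eq_toOuterMeasure]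
  rfl

end IidSamples

section ProductWeights

variable {ι κ Z : Type*} [Fintype ι] [Fintype κ]

theorem tsum_mul_prod_eq_mul_tsum_subtype (p : ι → Prop) [DecidablePred p]
    (F : ({i // p i} → Z) → ℝ≥0∞) (w : ι → Z → ℝ≥0∞) :
    ∑' S : ι → Z, F (fun i => S i) * ∏ i, w i (S i) =
      (∑' U : {i // p i} → Z, F U * ∏ i : {i // p i}, w i (U i)) *
        ∑' V : {i // ¬p i} → Z, ∏ i : {i // ¬p i}, w i (V i) := by
  rw [← (Equiv.piEquivPiSubtypeProd p fun _ => Z).symm.tsum_eq, ENNReal.tsum_prod',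
    ← ENNReal.tsum_mul_right]
  refine tsum_congr fun U => ?_
  rw [← ENNReal.tsum_mul_left]
  refine tsum_congr fun V => ?_
  rw [← Fintype.prod_subtype_mul_prod_subtype p, mul_assoc]
  have hV : ∀ i : {i // ¬p i}, ¬p i := Subtype.prop
  simp [Equiv.piEquivPiSubtypeProd_symm_apply, Subtype.prop, hV]

theorem tsum_comp_mul_prod_eq (e : κ ≃ ι) (F : (κ → Z) → ℝ≥0∞) (w : Z → ℝ≥0∞) :
    ∑' U : ι → Z, F (U ∘ e) * ∏ i, w (U i) = ∑' T : κ → Z, F T * ∏ j, w (T j) := by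
  rw [← (e.arrowCongr (Equiv.refl Z)).tsum_eq]
  refine tsum_congr fun T => ?_
  rw [← e.prod_comp]
  simp [Equiv.arrowCongr_apply, Function.comp_def]

end ProductWeights

section Subsamples

variable {Z : Type*} {k : ℕ}

def indicesIn (s : Set Z) (S : Fin k → Z) : Finset (Fin k) := {i | S i ∈ s}

def sampleAt (A : Finset (Fin k)) (S : Fin k → Z) : Fin #A → Z :=
  fun j => S (A.orderEmbOfFin rfl j)

theorem indicesIn_eq_iff {s : Set Z} {S : Fin k → Z} {A : Finset (Fin k)} :
    indicesIn s S = A ↔ ∀ i, i ∈ A ↔ S i ∈ s := by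
  simp only [indicesIn, Finset.ext_iff, mem_filter, mem_univ, true_and]
  exact forall_congr' fun _ => Iff.comm

variable (μ : PMF Z) (s : Set Z)

theorem tsum_indicator_ne_zero (hs : ∃ z ∈ s, z ∈ μ.support) : ∑' z, s.indicator μ z ≠ 0 := by
  simpa using hs

variable (hs : ∃ z ∈ s, z ∈ μ.support)

theorem indicator_eq_filter_mul (z : Z) :
    s.indicator μ z = μ.filter s hs z * ∑' z', s.indicator μ z' := by
  rw [PMF.filter_apply, mul_assoc, ENNReal.inv_mul_cancel (tsum_indicator_ne_zero μ s hs)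
    (μ.tsum_coe_indicator_ne_top s), mul_one]

theorem exists_iidProb_indicesIn_sampleAt_eq_mul (A : Finset (Fin k)) :
    ∃ C, ∀ Bad : Set (Fin #A → Z),
      iidProb μ {S | indicesIn s S = A ∧ sampleAt A S ∈ Bad} = iidProb (μ.filter s hs) Bad * C := by
  set q := ∑' z, s.indicator μ z
  -- `∏ i, w i (S i)` is the weight of `S` on the event `indicesIn s S = A`, and `0` off it.
  let w : Fin k → Z → ℝ≥0∞ := fun i z => if (i ∈ A ↔ z ∈ s) then μ z else 0
  let e : Fin #A ≃ {i // i ∈ A} := (A.orderIsoOfFin rfl).toEquiv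
  refine ⟨q ^ #A * ∑' V : {i // i ∉ A} → Z, ∏ i : {i // i ∉ A}, w i (V i), fun Bad => ?_⟩
  let F : ({i // i ∈ A} → Z) → ℝ≥0∞ := fun U => Bad.indicator 1 (U ∘ e)
  have hsample : ∀ S : Fin k → Z, (fun i : {i // i ∈ A} => S i) ∘ e = sampleAt A S :=
    fun S => funext fun j => by simp [e, sampleAt]
  have hsplit : ∀ S : Fin k → Z,
      {S | indicesIn s S = A ∧ sampleAt A S ∈ Bad}.indicator (fun T => ∏ i, μ (T i)) S =
        F (fun i => S i) * ∏ i, w i (S i) := by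
    intro S
    simp only [F, w, hsample, Set.indicator_apply, prod_ite_zero, mem_univ, true_implies,
      Set.mem_ofPred_eq, indicesIn_eq_iff, Pi.one_apply]
    rw [ite_zero_mul_ite_zero, one_mul]
    exact if_congr and_comm rfl rfl
  have hin : ∀ U : {i // i ∈ A} → Z,
      ∏ i : {i // i ∈ A}, w i (U i) = (∏ i, μ.filter s hs (U i)) * q ^ #A := by
    have hfilter : ∀ z, (if z ∈ s then μ z else 0) = μ.filter s hs z * q := fun z => by
      rw [← indicator_eq_filter_mul, Set.indicator_apply]
    intro U
    simp only [w, Subtype.prop, true_iff, hfilter, prod_mul_distrib, prod_const, card_univ,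
      Fintype.card_coe]
  calc iidProb μ {S | indicesIn s S = A ∧ sampleAt A S ∈ Bad}
      = ∑' S : Fin k → Z, F (fun i => S i) * ∏ i, w i (S i) := tsum_congr hsplit
    _ = (∑' U, F U * ∏ i : {i // i ∈ A}, w i (U i)) *
          ∑' V : {i // i ∉ A} → Z, ∏ i : {i // i ∉ A}, w i (V i) := by
      convert tsum_mul_prod_eq_mul_tsum_subtype _ F w
    _ = (∑' U, Bad.indicator 1 (U ∘ e) * ∏ i, μ.filter s hs (U i)) * q ^ #A *
          ∑' V : {i // i ∉ A} → Z, ∏ i : {i // i ∉ A}, w i (V i) := by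
      simp only [hin, ← mul_assoc, ENNReal.tsum_mul_right, F]
    _ = iidProb (μ.filter s hs) Bad * (q ^ #A * ∑' V : {i // i ∉ A} → Z,
          ∏ i : {i // i ∉ A}, w i (V i)) := by
      rw [tsum_comp_mul_prod_eq e (Bad.indicator 1), mul_assoc]
      congr 2 with T
      simp [Set.indicator_apply]

theorem iidProb_indicesIn_sampleAt (A : Finset (Fin k)) (Bad : Set (Fin #A → Z)) :
    iidProb μ {S | indicesIn s S = A ∧ sampleAt A S ∈ Bad} =
      iidProb (μ.filter s hs) Bad * iidProb μ {S | indicesIn s S = A} := by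
  obtain ⟨C, hC⟩ := exists_iidProb_indicesIn_sampleAt_eq_mul μ s hs A
  have hA := hC Set.univ
  simp only [Set.mem_univ, and_true, iidProb_univ, one_mul] at hA
  rw [hC, hA]

theorem sum_iidProb_indicesIn_eq_one :
    ∑ A : Finset (Fin k), iidProb μ {S | indicesIn s S = A} = 1 := by
  rw [← (PMF.map (indicesIn s) (iidPMF μ k)).tsum_coe, tsum_fintype]
  refine sum_congr rfl fun A _ => ?_
  rw [← PMF.toOuterMeasure_apply_singleton, PMF.toOuterMeasure_map_apply,
    iidProb_eq_toOuterMeasure]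
  rfl

theorem one_sub_two_mul_le_iidProb_sampleAt_mem (Good : ∀ r, Set (Fin r → Z)) {δ : ℝ≥0∞}
    {kG : ℕ} (hGood : ∀ r, kG ≤ r → 1 - δ ≤ iidProb (μ.filter s hs) (Good r))
    (hk : 1 - δ ≤ iidProb μ {S : Fin k → Z | kG ≤ #(indicesIn s S)}) :
    1 - 2 * δ ≤ iidProb μ {S : Fin k → Z | sampleAt (indicesIn s S) S ∈ Good _} := by
  set Large := univ.filter fun A : Finset (Fin k) => kG ≤ #A
  set Bad : Finset (Fin k) → Set (Fin k → Z) :=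
    fun A => {S | indicesIn s S = A ∧ sampleAt A S ∈ (Good #A)ᶜ}
  have hcover : {S : Fin k → Z | sampleAt (indicesIn s S) S ∈ Good _}ᶜ ⊆
      {S | kG ≤ #(indicesIn s S)}ᶜ ∪ ⋃ A ∈ Large, Bad A := by
    intro S hS
    by_cases hkS : kG ≤ #(indicesIn s S)
    · exact Or.inr (Set.mem_biUnion (mem_filter.2 ⟨mem_univ _, hkS⟩) ⟨rfl, hS⟩)
    · exact Or.inl hkS
  have hBad : ∀ A ∈ Large, iidProb μ (Bad A) ≤ δ * iidProb μ {S | indicesIn s S = A} := by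
    intro A hA
    rw [iidProb_indicesIn_sampleAt μ s hs]
    gcongr
    exact (iidProb_compl_le_iff _ _ _).2 (hGood _ (mem_filter.1 hA).2)
  rw [← iidProb_compl_le_iff, two_mul]
  calc iidProb μ {S : Fin k → Z | sampleAt (indicesIn s S) S ∈ Good _}ᶜ
      ≤ iidProb μ ({S | kG ≤ #(indicesIn s S)}ᶜ ∪ ⋃ A ∈ Large, Bad A) := iidProb_mono μ hcover
    _ ≤ iidProb μ {S | kG ≤ #(indicesIn s S)}ᶜ + ∑ A ∈ Large, iidProb μ (Bad A) := by
      simp only [iidProb_eq_toOuterMeasure]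
      exact (measure_union_le _ _).trans (add_le_add_right (measure_biUnion_finset_le _ _) _)
    _ ≤ δ + ∑ A, δ * iidProb μ {S | indicesIn s S = A} :=
      add_le_add ((iidProb_compl_le_iff _ _ _).2 hk)
        ((sum_le_sum hBad).trans (sum_le_sum_of_subset (filter_subset _ _)))
    _ = δ + δ := by rw [← mul_sum, sum_iidProb_indicesIn_eq_one, mul_one]

end Subsamples

section Modeled

variable {X : Type*}

theorem mem_supp_iff_map_fst_ne_zero {D : PMF (X × Bool)} {x : X} :
    x ∈ Supp D ↔ D.map Prod.fst x ≠ 0 := by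
  rw [← PMF.mem_support_iff, PMF.mem_support_map_iff]
  simp [Supp]

theorem map_fst_modeled (D : PMF (X × Bool)) (pt : X → unitInterval) :
    (modeled D pt).map Prod.fst = D.map Prod.fst := by
  simp only [modeled, PMF.map_bind, PMF.map_comp]
  exact (congrArg _ (funext fun a => PMF.map_const _ a)).trans (PMF.bind_pure _)

theorem supp_modeled (D : PMF (X × Bool)) (pt : X → unitInterval) :
    Supp (modeled D pt) = Supp D := by
  ext x
  rw [mem_supp_iff_map_fst_ne_zero, map_fst_modeled, ← mem_supp_iff_map_fst_ne_zero]

theorem exists_fst_mem_modeled_ne_zero {D : PMF (X × Bool)} (pt : X → unitInterval) {g : Set X}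
    (hg : ∃ z : X × Bool, z.1 ∈ g ∧ D z ≠ 0) : ∃ z : X × Bool, z.1 ∈ g ∧ modeled D pt z ≠ 0 := by
  obtain ⟨⟨x, b⟩, hx, hD⟩ := hg
  obtain ⟨b', hb'⟩ : x ∈ Supp (modeled D pt) := (supp_modeled D pt).symm ▸ ⟨b, hD⟩
  exact ⟨(x, b'), hx, hb'⟩

theorem modeled_apply (D : PMF (X × Bool)) (pt : X → unitInterval) (x : X) (b : Bool) :
    modeled D pt (x, b) = D.map Prod.fst x *
      PMF.bernoulli (Real.toNNReal (pt x)) (Real.toNNReal_le_one.2 (pt x).2.2) b := by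
  rw [modeled, PMF.bind_apply, tsum_eq_single x]
  · simp [PMF.map_apply]
  · intro x' hx'
    simp [PMF.map_apply, Ne.symm hx']

theorem condProb_modeled {D : PMF (X × Bool)} {pt : X → unitInterval} {x : X}
    (hx : x ∈ Supp (modeled D pt)) : condProb (modeled D pt) x = pt x := by
  rw [mem_supp_iff_map_fst_ne_zero, map_fst_modeled] at hx
  have hm : (D.map Prod.fst x).toReal ≠ 0 :=
    ENNReal.toReal_ne_zero.2 ⟨hx, PMF.apply_ne_top _ _⟩
  have hp := (pt x).2
  apply Subtype.ext
  simp only [condProb, modeled_apply, PMF.bernoulli_apply, cond_true, cond_false,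
    ENNReal.toReal_mul, ENNReal.coe_toReal, NNReal.coe_sub (Real.toNNReal_le_one.2 hp.2),
    NNReal.coe_one, Real.coe_toNNReal _ hp.1, ← mul_add, add_sub_cancel, mul_one]
  exact mul_div_cancel_left₀ _ hm

end Modeled

section Conditioning

variable {X : Type*} {μ : PMF (X × Bool)} {g : Set X}

theorem supp_condOn_subset (hg : ∃ z : X × Bool, z.1 ∈ g ∧ μ z ≠ 0) :
    Supp (condOn μ g hg) ⊆ g ∩ Supp μ := by
  rintro x ⟨b, hb⟩
  obtain ⟨hx, hμ⟩ := (PMF.filter_apply_ne_zero_iff hg (x, b)).1 hb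
  exact ⟨hx, b, hμ⟩

theorem condProb_condOn (hg : ∃ z : X × Bool, z.1 ∈ g ∧ μ z ≠ 0) {x : X} (hx : x ∈ g) :
    condProb (condOn μ g hg) x = condProb μ x := by
  set s : Set (X × Bool) := {z | z.1 ∈ g}
  have hq : (∑' z, s.indicator μ z).toReal ≠ 0 :=
    ENNReal.toReal_ne_zero.2 ⟨tsum_indicator_ne_zero μ s hg, μ.tsum_coe_indicator_ne_top s⟩
  have hμ : ∀ b, μ (x, b) = condOn μ g hg (x, b) * ∑' z, s.indicator μ z := fun b => by
    rw [condOn, ← indicator_eq_filter_mul μ s hg, Set.indicator_of_mem (show (x, b) ∈ s from hx)]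
  apply Subtype.ext
  simp only [condProb, hμ, ENNReal.toReal_mul, ← add_mul, mul_div_mul_right _ _ hq]

end Conditioning

theorem FProper.loss_le_of_condProb_eq {X : Type*} {f : X × unitInterval → unitInterval}
    {L : LossFunction X} (hf : FProper f L) {μ : PMF (X × Bool)} {pt : X → unitInterval}
    (hpt : ∀ x ∈ Supp μ, condProb μ x = pt x) (h : X → unitInterval) :
    L.loss μ (fun x => f (x, pt x)) ≤ L.loss μ h := by
  rw [L.locality μ _ (bayesPred f μ) fun x hx => by rw [bayesPred, if_pos hx, hpt x hx]]
  exact hf μ h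

theorem FProper.loss_condOn_modeled_le {X : Type*} {f : X × unitInterval → unitInterval}
    {L : LossFunction X} (hf : FProper f L) {D : PMF (X × Bool)} {pt : X → unitInterval}
    {g : Set X} (hg : ∃ z : X × Bool, z.1 ∈ g ∧ modeled D pt z ≠ 0) (h : X → unitInterval) :
    L.loss (condOn (modeled D pt) g hg) (fun x => f (x, pt x)) ≤
      L.loss (condOn (modeled D pt) g hg) h := by
  refine hf.loss_le_of_condProb_eq (fun x hx => ?_) h
  obtain ⟨hxg, hxμ⟩ := supp_condOn_subset hg hx
  rw [condProb_condOn hg hxg, condProb_modeled hxμ]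

section Distinguisher

variable {X : Type*} {k : ℕ}

theorem map_orderEmbOfFin_uniformOfFintype {α : Type*} [LinearOrder α] (A : Finset α)
    (hA : A.Nonempty) [NeZero #A] :
    (PMF.uniformOfFintype (Fin #A)).map (A.orderEmbOfFin rfl) = PMF.uniformOfFinset A hA := by
  ext a
  rw [PMF.map_apply, PMF.uniformOfFinset_apply, tsum_fintype]
  simp only [PMF.uniformOfFintype_apply, Fintype.card_fin]
  split_ifs with ha
  · obtain ⟨j, rfl⟩ : a ∈ Set.range (A.orderEmbOfFin rfl) := by rwa [range_orderEmbOfFin]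
    simp [(A.orderEmbOfFin rfl).injective.eq_iff]
  · refine sum_eq_zero fun j _ => if_neg ?_
    rintro rfl
    exact ha (orderEmbOfFin_mem A rfl j)

theorem subEmp_eq_empDist_sampleAt (inp : Fin k → X × Bool × unitInterval) (g : Set X)
    (hne : (univ.filter fun i : Fin k => (inp i).1 ∈ g).Nonempty) :
    subEmp inp g hne = empDist hne.card_pos.ne'
      (sampleAt _ fun i => ((inp i).1, (inp i).2.1)) := by
  have : NeZero #(univ.filter fun i : Fin k => (inp i).1 ∈ g) := ⟨hne.card_pos.ne'⟩
  rw [subEmp, empDist, ← map_orderEmbOfFin_uniformOfFintype _ hne, PMF.map_comp]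
  rfl

theorem exists_eq_of_mem_supp_subEmp {inp : Fin k → X × Bool × unitInterval} {g : Set X}
    {hne : (univ.filter fun i : Fin k => (inp i).1 ∈ g).Nonempty} {x : X}
    (hx : x ∈ Supp (subEmp inp g hne)) : ∃ i, (inp i).1 = x := by
  obtain ⟨y, hy⟩ := hx
  obtain ⟨i, -, hi⟩ := (PMF.mem_support_map_iff _ _ _).1 hy
  exact ⟨i, congrArg Prod.fst hi⟩

theorem fg_apply_of_exists_eq {f : X × unitInterval → unitInterval}
    {inp : Fin k → X × Bool × unitInterval} {pt : X → unitInterval}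
    (hpt : ∀ i, (inp i).2.2 = pt (inp i).1) {x : X} (hx : ∃ i, (inp i).1 = x) :
    fg f inp x = f (x, pt x) := by
  obtain ⟨i, hi⟩ := hx
  have hx' : (univ.filter fun i : Fin k => (inp i).1 = x).Nonempty :=
    ⟨i, mem_filter.2 ⟨mem_univ _, hi⟩⟩
  have hmin := (mem_filter.1 ((univ.filter fun i : Fin k => (inp i).1 = x).min'_mem hx')).2
  rw [fg, dif_pos hx', hpt, hmin]

theorem distinguisher_eq_true_of_deviation_le {L : LossFunction X}
    {f : X × unitInterval → unitInterval} {g : Set X} {h : X → unitInterval} {ε : ℝ}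
    {pt : X → unitInterval} {ν : PMF (X × Bool)} {S : Fin k → X × Bool}
    (hν : L.loss ν (fun x => f (x, pt x)) ≤ L.loss ν h)
    (hS : ∀ hr : #(indicesIn {z : X × Bool | z.1 ∈ g} S) ≠ 0,
      |(L.loss (empDist hr (sampleAt _ S)) h : ℝ) - L.loss ν h| ≤ ε ∧
      |(L.loss (empDist hr (sampleAt _ S)) (fun x => f (x, pt x)) : ℝ) -
        L.loss ν (fun x => f (x, pt x))| ≤ ε) :
    distinguisher L f g h ε (fun i => ((S i).1, (S i).2, pt (S i).1)) = true := by
  rw [distinguisher]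
  split_ifs with hne
  · have hfg := L.locality (subEmp _ g hne) (fg f _) (fun x => f (x, pt x)) fun x hx =>
      fg_apply_of_exists_eq (fun _ => rfl) (exists_eq_of_mem_supp_subEmp hx)
    have hr : #(indicesIn {z : X × Bool | z.1 ∈ g} S) ≠ 0 := hne.card_pos.ne'
    have hemp : subEmp _ g hne = empDist hr (sampleAt _ S) := subEmp_eq_empDist_sampleAt _ g hne
    obtain ⟨hdev_h, hdev_f⟩ := hS hr
    rw [decide_eq_true_eq, hfg, hemp]
    linarith [abs_le.1 hdev_h, abs_le.1 hdev_f, Subtype.coe_le_coe.2 hν]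
  · rfl

end Distinguisher

theorem distinguisher_accepts_on_modeled_general {X : Type*}
    (f : X × unitInterval → unitInterval) (L : LossFunction X) (hf : FProper f L)
    (D : PMF (X × Bool)) (pt : X → unitInterval) (g : Set X)
    (hgD : ∃ z : X × Bool, z.1 ∈ g ∧ D z ≠ 0)
    (h : X → unitInterval) (ε' δ' : ℝ)
    (kG : ℕ)
    (hkG : ∀ (r : ℕ) (hr : r ≠ 0), kG ≤ r → ∀ D' : PMF (X × Bool),
      1 - ENNReal.ofReal δ' ≤ iidProb D' {S' : Fin r → X × Bool |
        |(L.loss (empDist hr S') h : ℝ) - (L.loss D' h : ℝ)| ≤ ε' ∧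
        |(L.loss (empDist hr S') (fun x => f (x, pt x)) : ℝ) -
          (L.loss D' (fun x => f (x, pt x)) : ℝ)| ≤ ε'})
    (k : ℕ)
    (hk : 1 - ENNReal.ofReal δ' ≤ iidProb (D.map Prod.fst)
      {T : Fin k → X | kG ≤ (Finset.univ.filter fun i : Fin k => T i ∈ g).card})
 :
    1 - ENNReal.ofReal (2 * δ') ≤ iidProb (modeled D pt)
      {S : Fin k → X × Bool |
        distinguisher L f g h ε' (fun i => ((S i).1, (S i).2, pt ((S i).1))) = true} := by
  set μ := modeled D pt
  have hgμ := exists_fst_mem_modeled_ne_zero pt hgD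
  set ν := condOn μ g hgμ
  have hν := hf.loss_condOn_modeled_le hgμ h
  set Good : ∀ r, Set (Fin r → X × Bool) := fun r => {S' | ∀ hr : r ≠ 0,
    |(L.loss (empDist hr S') h : ℝ) - L.loss ν h| ≤ ε' ∧
    |(L.loss (empDist hr S') (fun x => f (x, pt x)) : ℝ) - L.loss ν (fun x => f (x, pt x))| ≤ ε'}
  have hGood : ∀ r, kG ≤ r → 1 - ENNReal.ofReal δ' ≤ iidProb ν (Good r) := by
    intro r hkr
    rcases eq_or_ne r 0 with rfl | hr
    · rw [show Good 0 = Set.univ from Set.eq_univ_of_forall fun _ hr => absurd rfl hr,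
        iidProb_univ]
      exact tsub_le_self
    · exact (hkG r hr hkr ν).trans (iidProb_mono ν fun _ hS' _ => hS')
  have hk' : 1 - ENNReal.ofReal δ' ≤
      iidProb μ {S : Fin k → X × Bool | kG ≤ #(indicesIn {z : X × Bool | z.1 ∈ g} S)} := by
    rw [← map_fst_modeled D pt, iidProb_map] at hk
    exact hk
  calc 1 - ENNReal.ofReal (2 * δ') = 1 - 2 * ENNReal.ofReal δ' := by
        rw [ENNReal.ofReal_mul zero_le_two, ENNReal.ofReal_ofNat]
    _ ≤ iidProb μ {S | sampleAt (indicesIn _ S) S ∈ Good _} :=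
        one_sub_two_mul_le_iidProb_sampleAt_mem μ _ hgμ Good hGood hk'
    _ ≤ _ := iidProb_mono μ fun _ hS => distinguisher_eq_true_of_deviation_le hν hS

/-- Under the stated uniform-convergence-type hypotheses on `k_G` and `k`,
the `k`-sample distinguisher `A_{g,h,ε'}` accepts with probability at least `1 - 2δ'` on inputs
generated from the modeled distribution `D̃ = D(p̃)` (with `p_i = p̃ x_i`). -/
theorem distinguisher_accepts_on_modeled {X : Type*} [Nonempty X]
    (f : X × unitInterval → unitInterval) (L : LossFunction X) (hf : FProper f L)
    (D : PMF (X × Bool)) (pt : X → unitInterval) (g : Set X)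
    (hgD : ∃ z : X × Bool, z.1 ∈ g ∧ D z ≠ 0)
    (h : X → unitInterval) (ε' δ' : ℝ)
    (hε' : ε' ∈ Set.Ioo (0:ℝ) 1) (hδ' : δ' ∈ Set.Ioo (0:ℝ) 1)
    (kG : ℕ)
    (hkG : ∀ (r : ℕ) (hr : r ≠ 0), kG ≤ r → ∀ D' : PMF (X × Bool),
      1 - ENNReal.ofReal δ' ≤ iidProb D' {S' : Fin r → X × Bool |
        |(L.loss (empDist hr S') h : ℝ) - (L.loss D' h : ℝ)| ≤ ε' ∧
        |(L.loss (empDist hr S') (fun x => f (x, pt x)) : ℝ) -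
          (L.loss D' (fun x => f (x, pt x)) : ℝ)| ≤ ε'})
    (k : ℕ)
    (hk : 1 - ENNReal.ofReal δ' ≤ iidProb (D.map Prod.fst)
      {T : Fin k → X | kG ≤ (Finset.univ.filter fun i : Fin k => T i ∈ g).card})
 :
    1 - ENNReal.ofReal (2 * δ') ≤ iidProb (modeled D pt)
      {S : Fin k → X × Bool |
        distinguisher L f g h ε' (fun i => ((S i).1, (S i).2, pt ((S i).1))) = true} :=
  distinguisher_accepts_on_modeled_general f L hf D pt g hgD h ε' δ' kG hkG k hk

end MultiPAC
end
end
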